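/- Let (q(t),p(t)) solve q̇ = p, ṗ = −q/|q|³ with H = |p|²/2 − 1/|q| > 0, and set r₀ = |p|²|q|−1, r̄ = −√(2H)|q|p, s₀ = −√(2H)⟨q,p⟩, s̄ = −(q/|q| − ⟨q,p⟩p). Then ṙ₀ = −(√(2H)/|q|)s₀, ṙ̄ = −(√(2H)/|q|)s̄, ṡ₀ = −(√(2H)/|q|)r₀, ṡ̄ = −(√(2H)/|q|)r̄; hence (r(t),s(t)) = (cosh θ(t) r(0) + sinh θ(t) s(0), sinh θ(t) r(0) + cosh θ(t) s(0)) with θ̇ = −√(2H)/|q(t)|, θ(0)=0. -/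

import Mathlib

open scoped RealInnerProductSpace

noncomputable section

abbrev E3 := EuclideanSpace ℝ (Fin 3)

/-- r₀ = |p|²|q| − 1. -/
def r0 (q p : ℝ → E3) (t : ℝ) : ℝ := ‖p t‖ ^ 2 * ‖q t‖ - 1

/-- r̄ = −√(2H)|q|p. -/
def rbar (h : ℝ) (q p : ℝ → E3) (t : ℝ) : E3 := -(Real.sqrt (2 * h) • ‖q t‖ • p t)

/-- s₀ = −√(2H)⟨q,p⟩. -/
def s0 (h : ℝ) (q p : ℝ → E3) (t : ℝ) : ℝ := -Real.sqrt (2 * h) * ⟪q t, p t⟫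

/-- s̄ = −(q/|q| − ⟨q,p⟩p). -/
def sbar (q p : ℝ → E3) (t : ℝ) : E3 := -(‖q t‖⁻¹ • q t - ⟪q t, p t⟫ • p t)

private lemma solve1 {M : Type*} [AddCommGroup M] [Module ℝ M] {x y : M} {c s : ℝ}
    (h : c ^ 2 - s ^ 2 = 1) : x = c • (c • x - s • y) + s • (c • y - s • x) := by
  match_scalars <;> nlinarith [h]

private lemma solve2 {M : Type*} [AddCommGroup M] [Module ℝ M] {x y : M} {c s : ℝ}
    (h : c ^ 2 - s ^ 2 = 1) : y = s • (c • x - s • y) + c • (c • y - s • x) := by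
  match_scalars <;> nlinarith [h]

theorem belbruno_flow_is_geodesic
    (q p : ℝ → E3) (h : ℝ) (hh : 0 < h)
    (hq0 : ∀ t, q t ≠ 0)
    (hq' : ∀ t, HasDerivAt q (p t) t)
    (hp' : ∀ t, HasDerivAt p (-((‖q t‖ ^ 3)⁻¹ • q t)) t)
    (hH : ∀ t, ‖p t‖ ^ 2 / 2 - ‖q t‖⁻¹ = h) :
    (∀ t, HasDerivAt (r0 q p) (-(Real.sqrt (2 * h) / ‖q t‖) * s0 h q p t) t) ∧
    (∀ t, HasDerivAt (rbar h q p) (-((Real.sqrt (2 * h) / ‖q t‖) • sbar q p t)) t) ∧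
    (∀ t, HasDerivAt (s0 h q p) (-(Real.sqrt (2 * h) / ‖q t‖) * r0 q p t) t) ∧
    (∀ t, HasDerivAt (sbar q p) (-((Real.sqrt (2 * h) / ‖q t‖) • rbar h q p t)) t) ∧
    (∀ θ : ℝ → ℝ, θ 0 = 0 →
      (∀ t, HasDerivAt θ (-(Real.sqrt (2 * h) / ‖q t‖)) t) →
      ∀ t,
        r0 q p t = Real.cosh (θ t) * r0 q p 0 + Real.sinh (θ t) * s0 h q p 0 ∧
        rbar h q p t = Real.cosh (θ t) • rbar h q p 0 + Real.sinh (θ t) • sbar q p 0 ∧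
        s0 h q p t = Real.sinh (θ t) * r0 q p 0 + Real.cosh (θ t) * s0 h q p 0 ∧
        sbar q p t = Real.sinh (θ t) • rbar h q p 0 + Real.cosh (θ t) • sbar q p 0) := by
  have h2 : (0:ℝ) < 2 * h := by linarith
  set a := Real.sqrt (2 * h) with ha
  have ha2 : a ^ 2 = 2 * h := Real.sq_sqrt h2.le
  have hnpos : ∀ t, (0:ℝ) < ‖q t‖ := fun t => norm_pos_iff.mpr (hq0 t)
  have hnne : ∀ t, ‖q t‖ ≠ 0 := fun t => (hnpos t).ne'
  have hE : ∀ t, ‖p t‖ ^ 2 = a ^ 2 + 2 * ‖q t‖⁻¹ := by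
    intro t; have := hH t; rw [ha2]; linarith
  -- derivative of ‖q‖
  have hnorm : ∀ t, HasDerivAt (fun t => ‖q t‖) (⟪q t, p t⟫ / ‖q t‖) t := by
    intro t
    have hqq : HasDerivAt (fun t => ⟪q t, q t⟫) (2 * ⟪q t, p t⟫) t := by
      have := (hq' t).inner ℝ (hq' t)
      refine this.congr_deriv (Eq.symm ?_)
      rw [real_inner_comm (p t) (q t)]
      ring
    have hne : ⟪q t, q t⟫ ≠ 0 := inner_self_ne_zero.mpr (hq0 t)
    have hsq := (Real.hasDerivAt_sqrt hne).comp t hqq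
    have heq : (fun t => Real.sqrt ⟪q t, q t⟫) = fun t => ‖q t‖ := by
      funext s
      rw [real_inner_self_eq_norm_sq, Real.sqrt_sq (norm_nonneg _)]
    simp only [Function.comp_def] at hsq
    rw [heq] at hsq
    refine hsq.congr_deriv (Eq.symm ?_)
    rw [real_inner_self_eq_norm_sq, Real.sqrt_sq (norm_nonneg _)]
    have hn := hnne t
    field_simp
    try ring
  -- derivative of ⟪q,p⟫
  have hqp : ∀ t, HasDerivAt (fun t => ⟪q t, p t⟫) (‖p t‖ ^ 2 - ‖q t‖⁻¹) t := by
    intro t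
    have := (hq' t).inner ℝ (hp' t)
    refine this.congr_deriv (Eq.symm ?_)
    rw [inner_neg_right, real_inner_smul_right, real_inner_self_eq_norm_sq,
      real_inner_self_eq_norm_sq]
    have hn := hnne t
    field_simp
    try ring
  -- derivative of ‖p‖²
  have hpp : ∀ t, HasDerivAt (fun t => ‖p t‖ ^ 2) (-2 * ⟪q t, p t⟫ / ‖q t‖ ^ 3) t := by
    intro t
    have hp2 := (hp' t).inner ℝ (hp' t)
    have heq : (fun t => ⟪p t, p t⟫) = fun t => ‖p t‖ ^ 2 := by
      funext s; rw [real_inner_self_eq_norm_sq]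
    rw [heq] at hp2
    refine hp2.congr_deriv (Eq.symm ?_)
    rw [inner_neg_right, inner_neg_left, real_inner_smul_right, real_inner_smul_left,
      real_inner_comm (q t) (p t)]
    have hn := hnne t
    field_simp
    try ring
  -- the four derivative claims
  have hr0 : ∀ t, HasDerivAt (r0 q p) (-(a / ‖q t‖) * s0 h q p t) t := by
    intro t
    have := ((hpp t).mul (hnorm t)).sub_const 1
    refine this.congr_deriv (Eq.symm ?_)
    unfold s0
    rw [← ha, hE t]
    have hn := hnne t
    field_simp
    try ring
  have hrbar : ∀ t, HasDerivAt (rbar h q p) (-((a / ‖q t‖) • sbar q p t)) t := by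
    intro t
    have := (((hnorm t).smul (hp' t)).const_smul a).neg
    refine this.congr_deriv (Eq.symm ?_)
    unfold sbar
    have hn := hnne t
    match_scalars <;> (field_simp; try ring)
  have hs0 : ∀ t, HasDerivAt (s0 h q p) (-(a / ‖q t‖) * r0 q p t) t := by
    intro t
    have := (hqp t).const_mul (-a)
    refine this.congr_deriv (Eq.symm ?_)
    unfold r0
    have hn := hnne t
    field_simp
    try ring
  have hsbar : ∀ t, HasDerivAt (sbar q p) (-((a / ‖q t‖) • rbar h q p t)) t := by
    intro t
    have h1 : HasDerivAt (fun t => ‖q t‖⁻¹ • q t)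
        ((‖q t‖⁻¹ • p t) + (-(⟪q t, p t⟫ / ‖q t‖) / ‖q t‖ ^ 2) • q t) t :=
      ((hnorm t).inv (hnne t)).smul (hq' t)
    have h2 : HasDerivAt (fun t => ⟪q t, p t⟫ • p t)
        (⟪q t, p t⟫ • (-((‖q t‖ ^ 3)⁻¹ • q t)) + (‖p t‖ ^ 2 - ‖q t‖⁻¹) • p t) t :=
      (hqp t).smul (hp' t)
    have := (h1.sub h2).neg
    refine this.congr_deriv (Eq.symm ?_)
    unfold rbar
    rw [← ha, hE t]
    have hn := hnne t
    match_scalars <;> (field_simp; try ring)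
  refine ⟨hr0, hrbar, hs0, hsbar, ?_⟩
  intro θ hθ0 hθ' t
  set X := θ t with hX
  have hch := Real.cosh_sq_sub_sinh_sq X
  -- scalar invariants
  have hFs : ∀ s, HasDerivAt
      (fun u => Real.cosh (θ u) * r0 q p u - Real.sinh (θ u) * s0 h q p u) 0 s := by
    intro s
    have := (((hθ' s).cosh.mul (hr0 s)).sub ((hθ' s).sinh.mul (hs0 s)))
    refine this.congr_deriv (Eq.symm ?_)
    ring
  have hGs : ∀ s, HasDerivAt
      (fun u => Real.cosh (θ u) * s0 h q p u - Real.sinh (θ u) * r0 q p u) 0 s := by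
    intro s
    have := (((hθ' s).cosh.mul (hs0 s)).sub ((hθ' s).sinh.mul (hr0 s)))
    refine this.congr_deriv (Eq.symm ?_)
    ring
  have hFc : Real.cosh X * r0 q p t - Real.sinh X * s0 h q p t = r0 q p 0 := by
    have := is_const_of_deriv_eq_zero (f := fun u =>
        Real.cosh (θ u) * r0 q p u - Real.sinh (θ u) * s0 h q p u)
      (fun x => (hFs x).differentiableAt) (fun x => (hFs x).deriv) t 0
    simpa [hθ0] using this
  have hGc : Real.cosh X * s0 h q p t - Real.sinh X * r0 q p t = s0 h q p 0 := by
    have := is_const_of_deriv_eq_zero (f := fun u =>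
        Real.cosh (θ u) * s0 h q p u - Real.sinh (θ u) * r0 q p u)
      (fun x => (hGs x).differentiableAt) (fun x => (hGs x).deriv) t 0
    simpa [hθ0] using this
  -- vector invariants
  have hFv : ∀ s, HasDerivAt
      (fun u => Real.cosh (θ u) • rbar h q p u - Real.sinh (θ u) • sbar q p u) 0 s := by
    intro s
    have := (((hθ' s).cosh.smul (hrbar s)).sub ((hθ' s).sinh.smul (hsbar s)))
    refine this.congr_deriv (Eq.symm ?_)
    module
  have hGv : ∀ s, HasDerivAt
      (fun u => Real.cosh (θ u) • sbar q p u - Real.sinh (θ u) • rbar h q p u) 0 s := by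
    intro s
    have := (((hθ' s).cosh.smul (hsbar s)).sub ((hθ' s).sinh.smul (hrbar s)))
    refine this.congr_deriv (Eq.symm ?_)
    module
  have hFvc : Real.cosh X • rbar h q p t - Real.sinh X • sbar q p t = rbar h q p 0 := by
    have := is_const_of_deriv_eq_zero (f := fun u =>
        Real.cosh (θ u) • rbar h q p u - Real.sinh (θ u) • sbar q p u)
      (fun x => (hFv x).differentiableAt) (fun x => (hFv x).deriv) t 0
    simpa [hθ0] using this
  have hGvc : Real.cosh X • sbar q p t - Real.sinh X • rbar h q p t = sbar q p 0 := by
    have := is_const_of_deriv_eq_zero (f := fun u =>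
        Real.cosh (θ u) • sbar q p u - Real.sinh (θ u) • rbar h q p u)
      (fun x => (hGv x).differentiableAt) (fun x => (hGv x).deriv) t 0
    simpa [hθ0] using this
  refine ⟨?_, ?_, ?_, ?_⟩
  · rw [← hFc, ← hGc]
    linear_combination -(r0 q p t) * hch
  · rw [← hFvc, ← hGvc]
    exact solve1 hch
  · rw [← hFc, ← hGc]
    linear_combination -(s0 h q p t) * hch
  · rw [← hFvc, ← hGvc]
    exact solve2 hch

end
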